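/- Let Γ ⊆ ℝ^d be a closed convex set containing 0 and suppose (t/3)𝔹 ∩ L(θ, r/2) ⊄ Γ, where 𝔹 is a compact convex neighborhood of 0 and L(θ, s) is the closed cone of aperture s around direction θ. Then for t large enough, (t/2)𝔹 ∩ L(θ, r) ⊄ Γ⁺_{log t}. -/

import Mathlib

/-!
Take a point `x ∈ (t/3)𝔹 ∩ L(θ, r/2)` outside `Γ` and push it radially outwards until its norm is
of order `log t`: it stays outside `Γ` (star-convexity about `0 ∈ Γ`) and inside `(t/3)𝔹`. Then
move it a distance `l = log t` along the outer normal of `Γ` at its nearest point. The new point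
is farther than `l` from `Γ`, lies in `(t/3 + l/ρ)𝔹 ⊆ (t/2)𝔹` when `𝔹` contains the ball of
radius `ρ`, and, its radial size being large compared with `l`, the shift only widens the cone
from `L(θ, r/2)` to `L(θ, r)`.
-/

open Pointwise

noncomputable def plusSet {d : ℕ} (l : ℝ) (Γ : Set (EuclideanSpace ℝ (Fin d))) :
    Set (EuclideanSpace ℝ (Fin d)) :=
  {v | Metric.infDist v Γ ≤ l}

/-- The cone `L(θ, r) = {a • v : a ∈ [0,∞), v ∈ B(θ, r)}`. -/
def coneL {d : ℕ} (θ : EuclideanSpace ℝ (Fin d)) (r : ℝ) : Set (EuclideanSpace ℝ (Fin d)) :=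
  {x | ∃ a : ℝ, 0 ≤ a ∧ ∃ v ∈ Metric.closedBall θ r, x = a • v}

open Metric Filter

section StarConvex

variable {𝕜 E : Type*} [Field 𝕜] [LinearOrder 𝕜] [IsStrictOrderedRing 𝕜] [AddCommGroup E]
  [Module 𝕜 E] {s : Set E}

theorem StarConvex.smul_set_subset_smul_set (hs : StarConvex 𝕜 0 s) {a b : 𝕜} (ha : 0 ≤ a)
    (hab : a ≤ b) : a • s ⊆ b • s := by
  rcases hab.eq_or_lt with rfl | hab
  · rfl
  rintro _ ⟨y, hy, rfl⟩
  have hb : 0 < b := ha.trans_lt hab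
  refine ⟨(a / b) • y, hs.smul_mem hy (div_nonneg ha hb.le) (div_le_one_of_le₀ hab.le hb.le), ?_⟩
  change b • (a / b) • y = a • y
  rw [smul_smul, mul_div_cancel₀ _ hb.ne']

theorem StarConvex.smul_notMem (hs : StarConvex 𝕜 0 s) {x : E} (hx : x ∉ s) {c : 𝕜}
    (hc : 1 ≤ c) : c • x ∉ s := fun hcx => hx <| by
  simpa [smul_smul, inv_mul_cancel₀ (zero_lt_one.trans_le hc).ne'] using
    hs.smul_mem hcx (inv_nonneg.2 (zero_le_one.trans hc)) (inv_le_one_of_one_le₀ hc)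

end StarConvex

section NormedSpace

variable {E : Type*} [NormedAddCommGroup E] [NormedSpace ℝ E] {s : Set E} {ρ : ℝ}

theorem mem_smul_set_of_closedBall_subset (hρ : 0 < ρ) (hball : closedBall 0 ρ ⊆ s) {y : E}
    {c : ℝ} (hy : ‖y‖ ≤ c) : y ∈ (c / ρ) • s := by
  have hc : 0 ≤ c / ρ := div_nonneg ((norm_nonneg y).trans hy) hρ.le
  refine Set.smul_set_mono hball ?_
  rwa [smul_closedBall _ _ hρ.le, smul_zero, Real.norm_of_nonneg hc, div_mul_cancel₀ _ hρ.ne',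
    mem_closedBall_zero_iff]

theorem StarConvex.exists_one_le_smul_mem_smul_set (hs : StarConvex ℝ 0 s) (hρ : 0 < ρ)
    (hball : closedBall 0 ρ ⊆ s) {t K : ℝ} (hK : K ≤ ρ * t) {x : E} (hx : x ∈ t • s)
    (hx0 : x ≠ 0) : ∃ c : ℝ, 1 ≤ c ∧ c • x ∈ t • s ∧ K ≤ ‖c • x‖ := by
  rcases le_or_gt K ‖x‖ with hxK | hxK
  · exact ⟨1, le_rfl, by rwa [one_smul], by rwa [one_smul]⟩
  have hxpos : 0 < ‖x‖ := norm_pos_iff.2 hx0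
  have hK0 : 0 ≤ K := (hxpos.trans hxK).le
  have hnorm : ‖(K / ‖x‖) • x‖ = K := by
    rw [norm_smul, Real.norm_of_nonneg (by positivity), div_mul_cancel₀ _ hxpos.ne']
  refine ⟨K / ‖x‖, (one_le_div hxpos).2 hxK.le, ?_, hnorm.ge⟩
  exact hs.smul_set_subset_smul_set (div_nonneg hK0 hρ.le)
    ((div_le_iff₀' hρ).2 hK) (mem_smul_set_of_closedBall_subset hρ hball hnorm.le)

end NormedSpace

open RealInnerProductSpace in
/-- Moving `x ∉ Γ` by `l` along the unit normal `(x - p) / ‖x - p‖` at its nearest point `p ∈ Γ`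
puts it at distance `l + ‖x - p‖` from `Γ`. -/
theorem exists_norm_eq_one_forall_lt_infDist_add_smul {E : Type*} [NormedAddCommGroup E]
    [InnerProductSpace ℝ E] [CompleteSpace E] {Γ : Set E} (hne : Γ.Nonempty) (hcl : IsClosed Γ)
    (hconv : Convex ℝ Γ) {x : E} (hx : x ∉ Γ) :
    ∃ w : E, ‖w‖ = 1 ∧ ∀ l : ℝ, l < infDist (x + l • w) Γ := by
  obtain ⟨p, hp, hmin⟩ := exists_norm_eq_iInf_of_complete_convex hne hcl.isComplete hconv x
  have hobtuse := (norm_eq_iInf_iff_real_inner_le_zero hconv hp).1 hmin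
  have hxp0 : x - p ≠ 0 := sub_ne_zero.2 fun h => hx (h ▸ hp)
  have hxp : 0 < ‖x - p‖ := norm_pos_iff.2 hxp0
  set w := ‖x - p‖⁻¹ • (x - p)
  have hw : ‖w‖ = 1 := norm_smul_inv_norm hxp0
  refine ⟨w, hw, fun l =>
    (lt_add_of_pos_right l hxp).trans_le <| (le_infDist hne).2 fun γ hγ => ?_⟩
  have hwxp : ⟪w, x - p⟫ = ‖x - p‖ := by
    rw [real_inner_smul_left, real_inner_self_eq_norm_sq]; field_simp
  have hwγ : ⟪w, γ - p⟫ ≤ 0 := by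
    rw [real_inner_smul_left]
    exact mul_nonpos_of_nonneg_of_nonpos (by positivity) (hobtuse γ hγ)
  calc l + ‖x - p‖ ≤ ⟪w, (x - p) + l • w - (γ - p)⟫ := by
        rw [inner_sub_right, inner_add_right, real_inner_smul_right, real_inner_self_eq_norm_sq, hw,
          hwxp]
        linarith
    _ ≤ ‖w‖ * ‖(x - p) + l • w - (γ - p)‖ := real_inner_le_norm _ _
    _ = dist (x + l • w) γ := by rw [hw, one_mul, dist_eq_norm]; congr 1; abel

theorem eventually_log_le_mul {c : ℝ} (hc : 0 < c) :
    ∀ᶠ t in atTop, 0 ≤ Real.log t ∧ Real.log t ≤ c * t := by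
  filter_upwards [Real.isLittleO_log_id_atTop.bound hc, eventually_ge_atTop 1] with t ht ht1
  have hlog := Real.log_nonneg ht1
  rw [Real.norm_of_nonneg hlog, id, Real.norm_of_nonneg (by linarith)] at ht
  exact ⟨hlog, ht⟩

section Cone

variable {d : ℕ} {θ x : EuclideanSpace ℝ (Fin d)} {s : ℝ}

theorem smul_mem_coneL {c : ℝ} (hc : 0 ≤ c) (hx : x ∈ coneL θ s) : c • x ∈ coneL θ s := by
  obtain ⟨a, ha, v, hv, rfl⟩ := hx
  exact ⟨c * a, mul_nonneg hc ha, v, hv, smul_smul c a v⟩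

theorem add_mem_coneL (hθ : ‖θ‖ = 1) (hx : x ∈ coneL θ s) (hx0 : x ≠ 0)
    {y : EuclideanSpace ℝ (Fin d)} {s' : ℝ} (hy : ‖y‖ * (1 + s) ≤ ‖x‖ * s') :
    x + y ∈ coneL θ (s + s') := by
  obtain ⟨a, ha, v, hv, rfl⟩ := hx
  have hvθ : ‖v - θ‖ ≤ s := by rwa [mem_closedBall, dist_eq_norm] at hv
  have hv1 : ‖v‖ ≤ 1 + s := hθ ▸ norm_le_insert' v θ |>.trans (by linarith)
  have ha0 : 0 < a := ha.lt_of_ne (by rintro rfl; simp at hx0)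
  have hxpos : 0 < ‖a • v‖ := norm_pos_iff.2 hx0
  have hs : 0 ≤ s := (norm_nonneg _).trans hvθ
  have hs' : 0 ≤ s' := (mul_nonneg_iff_of_pos_left hxpos).1 (le_trans (by positivity) hy)
  have hya : ‖y‖ ≤ a * s' := by
    rw [norm_smul, Real.norm_of_nonneg ha] at hy
    nlinarith [mul_le_mul_of_nonneg_left hv1 (mul_nonneg ha hs')]
  refine ⟨a, ha, v + a⁻¹ • y, ?_, by rw [smul_add, smul_inv_smul₀ ha0.ne']⟩
  rw [mem_closedBall, dist_eq_norm]
  calc ‖v + a⁻¹ • y - θ‖ ≤ ‖v - θ‖ + ‖a⁻¹ • y‖ := by rw [add_sub_right_comm]; exact norm_add_le _ _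
    _ ≤ s + s' := by
      gcongr
      rwa [norm_smul, norm_inv, Real.norm_of_nonneg ha, inv_mul_le_iff₀ ha0]

end Cone

theorem not_subset_plusSet_of_not_subset {d : ℕ} {𝔹 Γ : Set (EuclideanSpace ℝ (Fin d))}
    (h𝔹 : Convex ℝ 𝔹) {ρ : ℝ} (hρ : 0 < ρ) (hball : closedBall 0 ρ ⊆ 𝔹)
    {θ : EuclideanSpace ℝ (Fin d)} (hθ : ‖θ‖ = 1) {r s l : ℝ} (hr : 0 < r) (hl : 0 ≤ l)
    (hls : l * (2 + r) ≤ r * ρ * s) (hΓc : IsClosed Γ) (hΓconv : Convex ℝ Γ) (hΓ0 : 0 ∈ Γ)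
    (h : ¬ s • 𝔹 ∩ coneL θ (r / 2) ⊆ Γ) :
    ¬ (s + l / ρ) • 𝔹 ∩ coneL θ r ⊆ plusSet l Γ := by
  obtain ⟨x, ⟨hxB, hxL⟩, hxΓ⟩ := Set.not_subset.1 h
  have hx0 : x ≠ 0 := by rintro rfl; exact hxΓ hΓ0
  have hs : 0 ≤ s := by
    have : 0 ≤ r * ρ * s := le_trans (by positivity) hls
    exact (mul_nonneg_iff_of_pos_left (by positivity)).1 this
  obtain ⟨c, hc, hcxB, hcx⟩ :=
    (h𝔹.starConvex (hball (mem_closedBall_self hρ.le))).exists_one_le_smul_mem_smul_set hρ hball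
      (K := l * (2 + r) / r) (by rw [div_le_iff₀ hr]; linarith) hxB hx0
  obtain ⟨w, hw, hdist⟩ := exists_norm_eq_one_forall_lt_infDist_add_smul ⟨0, hΓ0⟩ hΓc hΓconv
    ((hΓconv.starConvex hΓ0).smul_notMem hxΓ hc)
  have hlw : ‖l • w‖ = l := by rw [norm_smul, hw, mul_one, Real.norm_of_nonneg hl]
  intro hsub
  refine (hdist l).not_ge (hsub ⟨?_, ?_⟩)
  · rw [h𝔹.add_smul hs (by positivity)]
    exact Set.add_mem_add hcxB (mem_smul_set_of_closedBall_subset hρ hball hlw.le)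
  · have hlx : ‖l • w‖ * (1 + r / 2) ≤ ‖c • x‖ * (r / 2) := by
      rw [div_le_iff₀ hr] at hcx
      rw [hlw]
      linarith
    have hcone := add_mem_coneL hθ (smul_mem_coneL (zero_le_one.trans hc) hxL)
      (smul_ne_zero (zero_lt_one.trans_le hc).ne' hx0) hlx
    rwa [add_halves] at hcone

theorem geometric_reduction_general {d : ℕ} (𝔹 : Set (EuclideanSpace ℝ (Fin d)))
    (h𝔹conv : Convex ℝ 𝔹) (h𝔹0 : 𝔹 ∈ nhds (0 : EuclideanSpace ℝ (Fin d)))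
    (θ : EuclideanSpace ℝ (Fin d)) (hθ : ‖θ‖ = 1) (r : ℝ) (hr : 0 < r) :
    ∃ T₀ : ℝ, ∀ t : ℝ, T₀ ≤ t →
      ∀ Γ : Set (EuclideanSpace ℝ (Fin d)), IsClosed Γ → Convex ℝ Γ →
        (0 : EuclideanSpace ℝ (Fin d)) ∈ Γ →
        ¬((t / 3) • 𝔹 ∩ coneL θ (r / 2) ⊆ Γ) →
        ¬((t / 2) • 𝔹 ∩ coneL θ r ⊆ plusSet (Real.log t) Γ) := by
  obtain ⟨ρ, hρ, hball⟩ := nhds_basis_closedBall.mem_iff.1 h𝔹0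
  obtain ⟨T₀, hT₀⟩ := eventually_atTop.1 (eventually_log_le_mul (c := r * ρ / (6 * (2 + r)))
    (by positivity))
  refine ⟨T₀, fun t ht Γ hΓc hΓconv hΓ0 hnot hsub => ?_⟩
  obtain ⟨hl, hlt⟩ := hT₀ t ht
  rw [div_mul_eq_mul_div, le_div_iff₀ (by positivity)] at hlt
  have ht0 : 0 ≤ t :=
    (mul_nonneg_iff_of_pos_left (by positivity)).1 (le_trans (by positivity) hlt)
  have hscale : t / 3 + Real.log t / ρ ≤ t / 2 := by
    have : Real.log t / ρ ≤ t / 6 := by rw [div_le_iff₀ hρ]; nlinarith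
    linarith
  refine not_subset_plusSet_of_not_subset h𝔹conv hρ hball hθ hr hl (by nlinarith) hΓc hΓconv hΓ0
    hnot (subset_trans (Set.inter_subset_inter_left _ ?_) hsub)
  exact (h𝔹conv.starConvex (hball (mem_closedBall_self hρ.le))).smul_set_subset_smul_set
    (by positivity) hscale

/-- Geometric reduction at the start of the proof of Theorem 1: for `t` large enough,
if `(t/3)𝔹 ∩ L(θ, r/2) ⊄ Γ` for a closed convex `Γ ∋ 0`, then
`(t/2)𝔹 ∩ L(θ, r) ⊄ Γ⁺_{log t}`. -/
theorem geometric_reduction {d : ℕ} (𝔹 : Set (EuclideanSpace ℝ (Fin d)))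
    (h𝔹c : IsCompact 𝔹) (h𝔹conv : Convex ℝ 𝔹) (h𝔹0 : 𝔹 ∈ nhds (0 : EuclideanSpace ℝ (Fin d)))
    (θ : EuclideanSpace ℝ (Fin d)) (hθ : ‖θ‖ = 1) (r : ℝ) (hr : 0 < r) :
    ∃ T₀ : ℝ, ∀ t : ℝ, T₀ ≤ t →
      ∀ Γ : Set (EuclideanSpace ℝ (Fin d)), IsClosed Γ → Convex ℝ Γ →
        (0 : EuclideanSpace ℝ (Fin d)) ∈ Γ →
        ¬((t / 3) • 𝔹 ∩ coneL θ (r / 2) ⊆ Γ) →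
        ¬((t / 2) • 𝔹 ∩ coneL θ r ⊆ plusSet (Real.log t) Γ) :=
  geometric_reduction_general 𝔹 h𝔹conv h𝔹0 θ hθ r hr
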